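/- Let n be a nonempty finite type with decidable equality and d := card n, let γ : ℝ, and let ρ : Matrix n n ℂ be positive definite of trace 1. Let Δ(ρ) := Matrix.diagonal (fun i => ρ i i) be the diagonal part of ρ. Then Δ(ρ) is positive definite of trace 1 and −Re Tr[(γ • (Δ(ρ) − ρ)) * (log ρ − log((1/d : ℝ) • 1))] = γ · (D(ρ‖Δ(ρ)) + D(Δ(ρ)‖ρ)). -/

import Mathlib

open Matrix
open scoped ComplexOrder

/-- matrix logarithm via the continuous functional calculus -/
noncomputable def mlog {n : Type*} [Fintype n] [DecidableEq n] (A : Matrix n n ℂ) :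
    Matrix n n ℂ := cfc Real.log A

/-- quantum relative entropy `D(ρ‖σ) = Re Tr[ρ (log ρ − log σ)]` -/
noncomputable def relEnt {n : Type*} [Fintype n] [DecidableEq n]
    (ρ σ : Matrix n n ℂ) : ℝ := (Matrix.trace (ρ * (mlog ρ - mlog σ))).re

/-!
Writing `Δ = Δ(ρ)`, the logarithm of the maximally mixed state is a scalar and `Δ - ρ` is
traceless, so the left-hand side is `γ Re Tr[(ρ - Δ) log ρ]`. The symmetrized relative entropy is
`Re Tr[(ρ - Δ)(log ρ - log Δ)]`, and `Tr[(ρ - Δ) log Δ] = 0` because `log Δ` is diagonal while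
`ρ - Δ` has zero diagonal.
-/

namespace Matrix

variable {n : Type*} [Fintype n] [DecidableEq n]

lemma trace_diagonal_diag_mul_diagonal {R : Type*} [NonUnitalNonAssocSemiring R]
    (A : Matrix n n R) (w : n → R) :
    trace (diagonal A.diag * diagonal w) = trace (A * diagonal w) := by
  simp [trace, mul_diagonal]

def diagonalStarAlgHom : (n → ℂ) →⋆ₐ[ℂ] Matrix n n ℂ :=
  { diagonalAlgHom ℂ with map_star' := fun v => (diagonal_conjTranspose v).symm }

end Matrix

section DiagonalCFC

variable {n : Type*} [Fintype n]

-- Instance search misses this: the `ℝ`-algebra structure of `n → ℂ` restricted from `ℂ` is not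
-- reducibly the pointwise one.
noncomputable instance : ContinuousFunctionalCalculus ℝ (n → ℂ) IsSelfAdjoint :=
  IsSelfAdjoint.instContinuousFunctionalCalculus

lemma Pi.finite_real_spectrum (v : n → ℂ) : (spectrum ℝ v).Finite := by
  rw [← spectrum.preimage_algebraMap ℂ, Pi.spectrum_eq]
  refine (Set.finite_iUnion fun i => ?_).preimage (FaithfulSMul.algebraMap_injective ℝ ℂ).injOn
  simpa using (spectrum.scalar_eq (A := ℂ) (v i)).symm ▸ Set.finite_singleton (v i)

lemma cfc_diagonal [DecidableEq n] (f : ℝ → ℝ) (v : n → ℂ) (hv : IsSelfAdjoint v) :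
    cfc f (diagonal v) = diagonal (cfc f v) :=
  (diagonalStarAlgHom.map_cfc f v ((Pi.finite_real_spectrum v).continuousOn f)
    continuous_id.matrix_diagonal hv (hv.map diagonalStarAlgHom)).symm

end DiagonalCFC

section Entropy

variable {n : Type*} [Fintype n] [DecidableEq n]

lemma mlog_algebraMap (c : ℝ) :
    mlog (algebraMap ℝ (Matrix n n ℂ) c) = algebraMap ℝ (Matrix n n ℂ) (Real.log c) :=
  cfc_algebraMap c Real.log

lemma relEnt_add_relEnt_swap (ρ σ : Matrix n n ℂ) :
    relEnt ρ σ + relEnt σ ρ = (trace ((ρ - σ) * (mlog ρ - mlog σ))).re := by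
  rw [relEnt, relEnt, ← Complex.add_re, ← trace_add]
  congr 2
  noncomm_ring

end Entropy

theorem entropy_production_deco_general
    {n : Type*} [Fintype n] [DecidableEq n]
    (γ : ℝ) (ρ : Matrix n n ℂ) (hρ : ρ.PosDef) (hρtr : Matrix.trace ρ = 1) :
    ((Matrix.diagonal (fun i => ρ i i)).PosDef ∧
      Matrix.trace (Matrix.diagonal (fun i => ρ i i)) = 1) ∧
    -(Matrix.trace ((γ • (Matrix.diagonal (fun i => ρ i i) - ρ)) *
        (mlog ρ - mlog ((1 / (Fintype.card n : ℝ)) • (1 : Matrix n n ℂ))))).re =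
      γ * (relEnt ρ (Matrix.diagonal (fun i => ρ i i)) +
        relEnt (Matrix.diagonal (fun i => ρ i i)) ρ) := by
  set Δ : Matrix n n ℂ := diagonal fun i => ρ i i with hΔ
  have hΔ_trace : trace Δ = 1 := (trace_diagonal _).trans hρtr
  refine ⟨⟨PosDef.diagonal fun _ => hρ.diag_pos, hΔ_trace⟩, ?_⟩
  have h_scalar : trace ((Δ - ρ) * mlog ((1 / (Fintype.card n : ℝ)) • 1)) = 0 := by
    rw [← Algebra.algebraMap_eq_smul_one, mlog_algebraMap, Algebra.algebraMap_eq_smul_one,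
      mul_smul_comm, mul_one, trace_smul, trace_sub, hΔ_trace, hρtr, sub_self, smul_zero]
  have h_cross : trace ((ρ - Δ) * mlog Δ) = 0 := by
    have hdiag : IsSelfAdjoint ρ.diag := funext fun i => hρ.isHermitian.apply i i
    rw [mlog, hΔ, cfc_diagonal _ (fun i => ρ i i) hdiag, sub_mul, trace_sub, sub_eq_zero]
    exact (trace_diagonal_diag_mul_diagonal ρ _).symm
  rw [relEnt_add_relEnt_swap, smul_mul_assoc, trace_smul, mul_sub, trace_sub, h_scalar,
    mul_sub (ρ - Δ), trace_sub, h_cross, ← neg_sub ρ Δ, neg_mul, trace_neg]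
  simp

/-- **Equation (2.21).** The entropy production of the decoherence semigroup
`𝓛^deco_*(ρ) = γ(Δ(ρ) − ρ)` equals `γ (D(ρ‖Δρ) + D(Δρ‖ρ))`; moreover `Δ(ρ)` is a
positive definite state. -/
theorem entropy_production_deco
    {n : Type*} [Fintype n] [DecidableEq n] [Nonempty n]
    (γ : ℝ) (ρ : Matrix n n ℂ) (hρ : ρ.PosDef) (hρtr : Matrix.trace ρ = 1) :
    ((Matrix.diagonal (fun i => ρ i i)).PosDef ∧
      Matrix.trace (Matrix.diagonal (fun i => ρ i i)) = 1) ∧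
    -(Matrix.trace ((γ • (Matrix.diagonal (fun i => ρ i i) - ρ)) *
        (mlog ρ - mlog ((1 / (Fintype.card n : ℝ)) • (1 : Matrix n n ℂ))))).re =
      γ * (relEnt ρ (Matrix.diagonal (fun i => ρ i i)) +
        relEnt (Matrix.diagonal (fun i => ρ i i)) ρ) :=
  entropy_production_deco_general γ ρ hρ hρtr
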